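/- Let $0 \le \gamma < d_2$ and suppose $|a'| \le K r$ for some $K>0$ and $x'' \in \mathbb{R}^{d_2}$. If $B(a,r) \subseteq B^{|\cdot|}(a', r) \times B^{|\cdot|}(a'', C_0 r^2)$ for some constant $C_0>0$, then there is a constant $C>0$ (depending only on $d_1, d_2, \gamma, C_0$) such that $\int_{B(a,r)} |x''-y''|^{-\gamma}\, dy \le C\, r^{d_1 + 2(d_2-\gamma)}$. -/
import Mathlib


open MeasureTheory Metric Set ENNReal

section Aux
variable {d : ℕ}
local notation "E" => EuclideanSpace ℝ (Fin d)

lemma aux_finite {γ : ℝ} (hγ₀ : 0 ≤ γ) (hγ : γ < d) :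
    ∫⁻ y in ball (0 : E) 1, ENNReal.ofReal (‖y‖ ^ (-γ)) < ∞ := by
  rcases eq_or_lt_of_le hγ₀ with h0 | hγpos
  · have : ∀ y : E, ENNReal.ofReal (‖y‖ ^ (-γ)) ≤ 1 := by
      intro y; rw [← h0, neg_zero, Real.rpow_zero]; simp
    calc ∫⁻ y in ball (0 : E) 1, ENNReal.ofReal (‖y‖ ^ (-γ))
        ≤ ∫⁻ _ in ball (0 : E) 1, 1 := lintegral_mono fun y => this y
      _ = volume (ball (0 : E) 1) := by simp
      _ < ∞ := measure_ball_lt_top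
  · set μ := volume.restrict (ball (0 : E) 1) with hμ
    have f_mble : Measurable fun y : E => ‖y‖ ^ (-γ) := by fun_prop
    have f_nn : (0 : E → ℝ) ≤ᵐ[μ] fun y => ‖y‖ ^ (-γ) :=
      Filter.Eventually.of_forall fun y => Real.rpow_nonneg (norm_nonneg _) _
    rw [lintegral_eq_lintegral_meas_le μ f_nn f_mble.aemeasurable]
    set V := volume (ball (0 : E) 1) with hV
    have hVlt : V < ∞ := measure_ball_lt_top
    have key : ∀ t ∈ Ioi (1:ℝ), μ {a : E | t ≤ ‖a‖ ^ (-γ)}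
        ≤ ENNReal.ofReal (t ^ (-(γ⁻¹ * d))) * V := by
      intro t ht
      have ht1 : (1:ℝ) < t := ht
      have ht0 : (0:ℝ) < t := lt_trans one_pos ht1
      have hsub : {a : E | t ≤ ‖a‖ ^ (-γ)} ⊆ closedBall 0 (t ^ (-γ⁻¹)) := by
        intro a ha
        simp only [mem_setOf_eq] at ha
        rw [mem_closedBall_zero_iff]
        rcases eq_or_lt_of_le (norm_nonneg a) with h | h
        · rw [← h]; positivity
        · have := Real.rpow_le_rpow_of_nonpos ht0 ha (neg_nonpos.mpr (inv_nonneg.mpr hγ₀))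
          calc ‖a‖ = (‖a‖ ^ (-γ)) ^ (-γ⁻¹) := by
                rw [← Real.rpow_mul (norm_nonneg a), neg_mul_neg,
                  mul_inv_cancel₀ (ne_of_gt hγpos), Real.rpow_one]
            _ ≤ t ^ (-γ⁻¹) := this
      calc μ {a : E | t ≤ ‖a‖ ^ (-γ)} ≤ volume (closedBall (0:E) (t ^ (-γ⁻¹))) :=
            le_trans (Measure.restrict_apply_le _ _) (measure_mono hsub)
        _ = ENNReal.ofReal ((t ^ (-γ⁻¹)) ^ (Module.finrank ℝ E)) * V := by
            rw [Measure.addHaar_closedBall _ _ (by positivity), hV]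
        _ = ENNReal.ofReal (t ^ (-(γ⁻¹ * d))) * V := by
            congr 2
            rw [← Real.rpow_natCast (t ^ (-γ⁻¹)), ← Real.rpow_mul ht0.le,
              finrank_euclideanSpace_fin, neg_mul]
    calc ∫⁻ t in Ioi (0:ℝ), μ {a : E | t ≤ ‖a‖ ^ (-γ)}
        ≤ ∫⁻ t in Ioc (0:ℝ) 1 ∪ Ioi 1, μ {a : E | t ≤ ‖a‖ ^ (-γ)} :=
          lintegral_mono_set Ioi_subset_Ioc_union_Ioi
      _ ≤ (∫⁻ t in Ioc (0:ℝ) 1, μ {a : E | t ≤ ‖a‖ ^ (-γ)})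
            + ∫⁻ t in Ioi (1:ℝ), μ {a : E | t ≤ ‖a‖ ^ (-γ)} := lintegral_union_le _ _ _
      _ < ∞ := by
          refine ENNReal.add_lt_top.2 ⟨?_, ?_⟩
          · calc ∫⁻ t in Ioc (0:ℝ) 1, μ {a : E | t ≤ ‖a‖ ^ (-γ)}
                ≤ ∫⁻ _ in Ioc (0:ℝ) 1, V := by
                  refine setLIntegral_mono' measurableSet_Ioc fun t _ => ?_
                  calc μ {a : E | t ≤ ‖a‖ ^ (-γ)} ≤ μ univ := measure_mono (subset_univ _)
                    _ = V := by rw [hμ, Measure.restrict_apply_univ]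
              _ = V * volume (Ioc (0:ℝ) 1) := by rw [setLIntegral_const]
              _ < ∞ := by
                  refine ENNReal.mul_lt_top hVlt ?_
                  simp [Real.volume_Ioc]
          · calc ∫⁻ t in Ioi (1:ℝ), μ {a : E | t ≤ ‖a‖ ^ (-γ)}
                ≤ ∫⁻ t in Ioi (1:ℝ), ENNReal.ofReal (t ^ (-(γ⁻¹ * d))) * V :=
                  setLIntegral_mono' measurableSet_Ioi key
              _ = (∫⁻ t in Ioi (1:ℝ), ENNReal.ofReal (t ^ (-(γ⁻¹ * d)))) * V :=
                  lintegral_mul_const' V _ hVlt.ne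
              _ < ∞ := by
                  refine ENNReal.mul_lt_top ?_ hVlt
                  refine IntegrableOn.setLIntegral_lt_top ?_
                  refine integrableOn_Ioi_rpow_of_lt ?_ one_pos
                  rw [neg_lt_neg_iff, show (1:ℝ) = γ⁻¹ * γ by field_simp]
                  exact mul_lt_mul_of_pos_left hγ (inv_pos.2 hγpos)

lemma aux_translate (γ : ℝ) (x : E) (R : ℝ) :
    ∫⁻ y in ball x R, ENNReal.ofReal (‖x - y‖ ^ (-γ))
      = ∫⁻ y in ball (0 : E) R, ENNReal.ofReal (‖y‖ ^ (-γ)) := by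
  have hmp : MeasurePreserving (fun y : E => x - y) volume volume :=
    Measure.measurePreserving_sub_left volume x
  have hemb : MeasurableEmbedding (fun y : E => x - y) :=
    (MeasurableEquiv.subLeft x).measurableEmbedding
  have hpre : (fun y : E => x - y) ⁻¹' (ball (0:E) R) = ball x R := by
    ext y
    simp [mem_ball, dist_eq_norm, norm_sub_rev]
  rw [← hpre]
  exact hmp.setLIntegral_comp_preimage_emb hemb (fun z => ENNReal.ofReal (‖z‖ ^ (-γ))) _

lemma aux_scale (γ : ℝ) {R : ℝ} (hR : 0 < R) :
    ∫⁻ y in ball (0 : E) R, ENNReal.ofReal (‖y‖ ^ (-γ))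
      = ENNReal.ofReal (R ^ ((d : ℝ) - γ)) *
          ∫⁻ y in ball (0 : E) 1, ENNReal.ofReal (‖y‖ ^ (-γ)) := by
  have hg : Measurable fun y : E => ENNReal.ofReal (‖y‖ ^ (-γ)) := by fun_prop
  have hF : Measurable ((ball (0:E) 1).indicator fun y : E => ENNReal.ofReal (‖y‖ ^ (-γ))) :=
    hg.indicator measurableSet_ball
  have key : ∀ y : E, (ball (0:E) R).indicator (fun y => ENNReal.ofReal (‖y‖ ^ (-γ))) y
      = ENNReal.ofReal (R ^ (-γ)) *
        (ball (0:E) 1).indicator (fun y => ENNReal.ofReal (‖y‖ ^ (-γ))) (R⁻¹ • y) := by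
    intro y
    have hmem : y ∈ ball (0:E) R ↔ R⁻¹ • y ∈ ball (0:E) 1 := by
      simp only [mem_ball_zero_iff, norm_smul, norm_inv, Real.norm_eq_abs,
        abs_of_pos hR, ← lt_div_iff₀' (inv_pos.2 hR)]
      rw [one_div, inv_inv]
    by_cases hy : y ∈ ball (0:E) R
    · rw [indicator_of_mem hy, indicator_of_mem (hmem.mp hy)]
      rw [← ENNReal.ofReal_mul (Real.rpow_nonneg hR.le _)]
      congr 1
      rw [norm_smul, norm_inv, Real.norm_eq_abs, abs_of_pos hR,
        Real.mul_rpow (inv_nonneg.2 hR.le) (norm_nonneg y),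
        ← mul_assoc, ← Real.mul_rpow hR.le (inv_nonneg.2 hR.le),
        mul_inv_cancel₀ hR.ne', Real.one_rpow, one_mul]
    · rw [indicator_of_notMem hy, indicator_of_notMem (fun h => hy (hmem.mpr h)), mul_zero]
  rw [← lintegral_indicator measurableSet_ball, ← lintegral_indicator measurableSet_ball]
  simp_rw [key]
  rw [lintegral_const_mul' _ _ ENNReal.ofReal_ne_top]
  have hmap : ∫⁻ y, (ball (0:E) 1).indicator (fun y => ENNReal.ofReal (‖y‖ ^ (-γ))) (R⁻¹ • y)
      = ENNReal.ofReal (R ^ (d : ℕ)) *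
        ∫⁻ y, (ball (0:E) 1).indicator (fun y => ENNReal.ofReal (‖y‖ ^ (-γ))) y := by
    rw [← lintegral_map hF (measurable_const_smul R⁻¹),
      MeasureTheory.Measure.map_addHaar_smul volume (inv_ne_zero hR.ne'),
      lintegral_smul_measure]
    congr 2
    rw [finrank_euclideanSpace_fin, ← inv_pow, inv_inv, abs_of_pos (pow_pos hR d)]
  rw [hmap, ← mul_assoc, ← ENNReal.ofReal_mul (Real.rpow_nonneg hR.le _)]
  congr 2
  rw [← Real.rpow_natCast R d, ← Real.rpow_add hR, sub_eq_neg_add]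

lemma aux_ball {γ : ℝ} (hγ₀ : 0 ≤ γ) (hd : 0 < d) (x c : E) {R : ℝ} (hR : 0 < R) :
    ∫⁻ y in ball c R, ENNReal.ofReal (‖x - y‖ ^ (-γ))
      ≤ ENNReal.ofReal (R ^ ((d : ℝ) - γ)) *
          ((∫⁻ y in ball (0 : E) 1, ENNReal.ofReal (‖y‖ ^ (-γ))) + volume (ball (0 : E) 1)) := by
  haveI : Nonempty (Fin d) := ⟨⟨0, hd⟩⟩
  haveI : Nontrivial E := inferInstance
  rw [mul_add]
  calc ∫⁻ y in ball c R, ENNReal.ofReal (‖x - y‖ ^ (-γ))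
      ≤ ∫⁻ y in ball x R ∪ (ball c R \ ball x R), ENNReal.ofReal (‖x - y‖ ^ (-γ)) := by
        refine lintegral_mono_set fun y hy => ?_
        by_cases h : y ∈ ball x R
        · exact Or.inl h
        · exact Or.inr ⟨hy, h⟩
    _ ≤ (∫⁻ y in ball x R, ENNReal.ofReal (‖x - y‖ ^ (-γ)))
          + ∫⁻ y in ball c R \ ball x R, ENNReal.ofReal (‖x - y‖ ^ (-γ)) :=
        lintegral_union_le _ _ _
    _ ≤ ENNReal.ofReal (R ^ ((d : ℝ) - γ)) *
            (∫⁻ y in ball (0 : E) 1, ENNReal.ofReal (‖y‖ ^ (-γ)))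
          + ENNReal.ofReal (R ^ ((d : ℝ) - γ)) * volume (ball (0 : E) 1) := by
        refine add_le_add ?_ ?_
        · rw [aux_translate, aux_scale γ hR]
        · calc ∫⁻ y in ball c R \ ball x R, ENNReal.ofReal (‖x - y‖ ^ (-γ))
              ≤ ∫⁻ _ in ball c R \ ball x R, ENNReal.ofReal (R ^ (-γ)) := by
                refine setLIntegral_mono' (measurableSet_ball.diff measurableSet_ball)
                  fun y hy => ?_
                refine ENNReal.ofReal_le_ofReal ?_
                refine Real.rpow_le_rpow_of_nonpos hR ?_ (neg_nonpos.2 hγ₀)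
                have : ¬ dist y x < R := fun h => hy.2 (mem_ball.mpr h)
                rw [dist_eq_norm, norm_sub_rev] at this
                linarith [not_lt.mp this]
            _ = ENNReal.ofReal (R ^ (-γ)) * volume (ball c R \ ball x R) :=
                setLIntegral_const _ _
            _ ≤ ENNReal.ofReal (R ^ (-γ)) * volume (ball c R) :=
                mul_le_mul_right (measure_mono diff_subset) _
            _ = ENNReal.ofReal (R ^ ((d : ℝ) - γ)) * volume (ball (0 : E) 1) := by
                rw [Measure.addHaar_ball _ _ hR.le, finrank_euclideanSpace_fin, ← mul_assoc,
                  ← ENNReal.ofReal_mul (Real.rpow_nonneg hR.le _), ← Real.rpow_natCast R d,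
                  ← Real.rpow_add hR, neg_add_eq_sub]

lemma aux_vol_ball (x : E) {r : ℝ} (hr : 0 < r) :
    volume (ball x r) = ENNReal.ofReal (r ^ d) * volume (ball (0 : E) 1) := by
  rcases Nat.eq_zero_or_pos d with h | h
  · subst h
    have h1 : ball x r = univ := eq_univ_of_forall fun y => by
      simp [mem_ball, Subsingleton.elim y x, hr]
    have h2 : ball (0 : EuclideanSpace ℝ (Fin 0)) 1 = univ := eq_univ_of_forall fun y => by
      simp [mem_ball, Subsingleton.elim y (0 : EuclideanSpace ℝ (Fin 0))]
    rw [h1, h2, pow_zero, ENNReal.ofReal_one, one_mul]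
  · haveI : Nonempty (Fin d) := ⟨⟨0, h⟩⟩
    rw [Measure.addHaar_ball _ _ hr.le, finrank_euclideanSpace_fin]

end Aux

/-- Integral of the second-layer weight `|x'' - y''|^{-γ}` over a Grushin ball contained in
a product of Euclidean balls. -/
theorem stmt_0 (d₁ d₂ : ℕ) (γ : ℝ) (hγ₀ : 0 ≤ γ) (hγ : γ < d₂) (C₀ : ℝ) (hC₀ : 0 < C₀) :
    ∃ C : ℝ, 0 < C ∧
      ∀ (ϱ : (EuclideanSpace ℝ (Fin d₁) × EuclideanSpace ℝ (Fin d₂)) →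
             (EuclideanSpace ℝ (Fin d₁) × EuclideanSpace ℝ (Fin d₂)) → ℝ)
        (K r : ℝ) (a : EuclideanSpace ℝ (Fin d₁) × EuclideanSpace ℝ (Fin d₂))
        (x'' : EuclideanSpace ℝ (Fin d₂)),
        0 < K → 0 < r → ‖a.1‖ ≤ K * r →
        {y | ϱ a y < r} ⊆ (ball a.1 r) ×ˢ (ball a.2 (C₀ * r ^ 2)) →
        ∫ y in {y | ϱ a y < r}, ‖x'' - y.2‖ ^ (-γ) ≤
          C * r ^ ((d₁ : ℝ) + 2 * ((d₂ : ℝ) - γ)) := by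
  set I := ∫⁻ y in ball (0 : EuclideanSpace ℝ (Fin d₂)) 1, ENNReal.ofReal (‖y‖ ^ (-γ)) with hI
  set V₁ := volume (ball (0 : EuclideanSpace ℝ (Fin d₁)) 1) with hV₁
  set V₂ := volume (ball (0 : EuclideanSpace ℝ (Fin d₂)) 1) with hV₂
  have hIlt : I < ∞ := aux_finite hγ₀ hγ
  have hV₁lt : V₁ < ∞ := measure_ball_lt_top
  have hV₂lt : V₂ < ∞ := measure_ball_lt_top
  have hV₁pos : V₁ ≠ 0 := (measure_ball_pos volume _ one_pos).ne'
  have hV₂pos : V₂ ≠ 0 := (measure_ball_pos volume _ one_pos).ne'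
  set D : ℝ≥0∞ := V₁ * (I + V₂) with hD
  have hDlt : D < ∞ := ENNReal.mul_lt_top hV₁lt (ENNReal.add_lt_top.2 ⟨hIlt, hV₂lt⟩)
  have hD0 : D ≠ 0 := mul_ne_zero hV₁pos (fun h => hV₂pos (by simpa using (add_eq_zero.mp h).2))
  set e : ℝ := (d₂ : ℝ) - γ with he
  refine ⟨D.toReal * C₀ ^ e, mul_pos (ENNReal.toReal_pos hD0 hDlt.ne)
    (Real.rpow_pos_of_pos hC₀ _), ?_⟩
  intro ϱ K r a x'' hK hr ha hsub
  set S := {y | ϱ a y < r} with hS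
  have hmble : Measurable fun y : EuclideanSpace ℝ (Fin d₁) × EuclideanSpace ℝ (Fin d₂) =>
      ‖x'' - y.2‖ ^ (-γ) := by fun_prop
  have hnn : (0 : (EuclideanSpace ℝ (Fin d₁) × EuclideanSpace ℝ (Fin d₂)) → ℝ)
      ≤ᵐ[volume.restrict S] fun y => ‖x'' - y.2‖ ^ (-γ) :=
    Filter.Eventually.of_forall fun y => Real.rpow_nonneg (norm_nonneg _) _
  rw [integral_eq_lintegral_of_nonneg_ae hnn hmble.aestronglyMeasurable.restrict]
  have hR : 0 < C₀ * r ^ 2 := by positivity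
  have hmeas : Measurable fun y : EuclideanSpace ℝ (Fin d₁) × EuclideanSpace ℝ (Fin d₂) =>
      ENNReal.ofReal (‖x'' - y.2‖ ^ (-γ)) := by fun_prop
  have key : ∫⁻ y in S, ENNReal.ofReal (‖x'' - y.2‖ ^ (-γ))
      ≤ ENNReal.ofReal (D.toReal * C₀ ^ e * r ^ ((d₁ : ℝ) + 2 * e)) := by
    have hrest : (volume : Measure (EuclideanSpace ℝ (Fin d₁) × EuclideanSpace ℝ (Fin d₂))).restrict
          ((ball a.1 r) ×ˢ (ball a.2 (C₀ * r ^ 2)))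
        = (volume.restrict (ball a.1 r)).prod (volume.restrict (ball a.2 (C₀ * r ^ 2))) := by
      rw [Measure.volume_eq_prod, Measure.prod_restrict]
    calc ∫⁻ y in S, ENNReal.ofReal (‖x'' - y.2‖ ^ (-γ))
        ≤ ∫⁻ y in (ball a.1 r) ×ˢ (ball a.2 (C₀ * r ^ 2)),
            ENNReal.ofReal (‖x'' - y.2‖ ^ (-γ)) := lintegral_mono_set hsub
      _ = volume (ball a.1 r) *
            ∫⁻ y'' in ball a.2 (C₀ * r ^ 2), ENNReal.ofReal (‖x'' - y''‖ ^ (-γ)) := by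
          rw [hrest]
          have h1 := lintegral_prod_mul (μ := volume.restrict (ball a.1 r))
            (ν := volume.restrict (ball a.2 (C₀ * r ^ 2)))
            (f := fun _ : EuclideanSpace ℝ (Fin d₁) => (1 : ℝ≥0∞))
            (g := fun y'' : EuclideanSpace ℝ (Fin d₂) => ENNReal.ofReal (‖x'' - y''‖ ^ (-γ)))
            aemeasurable_const (by fun_prop)
          simp only [one_mul, lintegral_one, Measure.restrict_apply_univ] at h1
          rw [h1]
      _ ≤ (ENNReal.ofReal (r ^ (d₁ : ℕ)) * V₁) *
            (ENNReal.ofReal ((C₀ * r ^ 2) ^ e) * (I + V₂)) := by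
          rw [aux_vol_ball a.1 hr]
          exact mul_le_mul_right (aux_ball hγ₀ (by exact_mod_cast hγ₀.trans_lt hγ) x'' a.2 hR) _
      _ = D * ENNReal.ofReal (r ^ (d₁ : ℕ) * (C₀ * r ^ 2) ^ e) := by
          rw [ENNReal.ofReal_mul (by positivity), hD]; ring
      _ = D * ENNReal.ofReal (C₀ ^ e * r ^ ((d₁ : ℝ) + 2 * e)) := by
          congr 1
          rw [Real.rpow_add hr, Real.mul_rpow hC₀.le (sq_nonneg r),
            ← Real.rpow_natCast r d₁, ← Real.rpow_natCast r 2, ← Real.rpow_mul hr.le]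
          push_cast
          ring_nf
      _ = ENNReal.ofReal (D.toReal * C₀ ^ e * r ^ ((d₁ : ℝ) + 2 * e)) := by
          rw [mul_assoc D.toReal, ENNReal.ofReal_mul ENNReal.toReal_nonneg,
            ENNReal.ofReal_toReal hDlt.ne]
  calc (∫⁻ y in S, ENNReal.ofReal (‖x'' - y.2‖ ^ (-γ))).toReal
      ≤ (ENNReal.ofReal (D.toReal * C₀ ^ e * r ^ ((d₁ : ℝ) + 2 * e))).toReal :=
        ENNReal.toReal_mono ENNReal.ofReal_ne_top key
    _ = D.toReal * C₀ ^ e * r ^ ((d₁ : ℝ) + 2 * e) :=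
        ENNReal.toReal_ofReal (by positivity)
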